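/- Let n ≥ 4 and s ≥ 1. Then monomials U, V belong to F(J(P_{n−3})^s) if and only if x_n^s x_{n−2}^s·U and x_n^s x_{n−2}^s·V belong to F(J(P_n)^s). Moreover, in that case: (1) U >_R V in the rooted order on F(J(P_{n−3})^s) if and only if x_n^s x_{n−2}^s·U >_R x_n^s x_{n−2}^s·V in the rooted order on F(J(P_n)^s); and (2) U ∈ G(J(P_{n−3})^s) if and only if x_n^s x_{n−2}^s·U ∈ G(J(P_n)^s). -/

import Mathlib

/-!
Monomials of `J(P_N)^s` are those whose exponent dominates a sum of `s` vertex covers of `P_N`,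
and the minimal generators of `J(P_N)` are the minimal vertex covers. A minimal cover of `P_n`
containing `x_n` and `x_{n-2}` omits `x_{n-1}`, and removing `x_n x_{n-2}` from it leaves a minimal
cover of `P_{n-3}`; conversely, adding `x_n x_{n-2}` to a minimal cover of `P_{n-3}` gives one of
`P_n`. Minimal covers are squarefree, so if `x_n^s x_{n-2}^s` divides an `s`-fold product then every
factor contains `x_n x_{n-2}`; this gives the bijection of `s`-fold products. The same exchange,
applied to a whole sum of `s` covers, transfers minimality in `J^s`.

`R(P_n)` is `x_{n-1} R(P_{n-2})` followed by `x_n x_{n-2} R(P_{n-3})`. Since `x_{n-1}` does not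
divide `x_n^s x_{n-2}^s U`, no expression of it uses the first block, so its expressions over
`R(P_n)` are those of `U` over `R(P_{n-3})` shifted by `|R(P_{n-2})|`, and the shift does not affect
lexicographic comparison.
-/

open MvPolynomial

noncomputable section

/-- The cover ideal of the path graph `P_n` on vertices `x_1, …, x_n`:
the intersection of the ideals `(x_i, x_{i+1})` over the edges of the path. -/
def pathCoverIdeal (k : Type*) [Field k] (n : ℕ) : Ideal (MvPolynomial ℕ k) :=
  ⨅ i ∈ Finset.Icc 1 (n - 1), Ideal.span {(X i : MvPolynomial ℕ k), X (i + 1)}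

/-- A monomial with coefficient `1`. -/
def IsMonomial {k : Type*} [Field k] (m : MvPolynomial ℕ k) : Prop :=
  ∃ a : ℕ →₀ ℕ, m = monomial a 1

/-- The minimal monomial generating set `G(I)` of a monomial ideal `I`:
monomials of `I` that are not strictly divisible by another monomial of `I`. -/
def minGens {k : Type*} [Field k] (I : Ideal (MvPolynomial ℕ k)) :
    Set (MvPolynomial ℕ k) :=
  {m | IsMonomial m ∧ m ∈ I ∧ ∀ m', IsMonomial m' → m' ∈ I → m' ∣ m → m' = m}

/-- The rooted list `R(P_n)` of the path `P_n`. -/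
def rootedList (k : Type*) [Field k] : ℕ → List (MvPolynomial ℕ k)
  | 0 => [1]
  | 1 => [1]
  | 2 => [X 1, X 2]
  | 3 => [X 2, X 1 * X 3]
  | (n + 4) =>
      ((rootedList k (n + 2)).map fun u => X (n + 3) * u) ++
      ((rootedList k (n + 1)).map fun u => X (n + 4) * X (n + 2) * u)

/-- `F(I^s)`: the set of `s`-fold products of minimal generators of `I`. -/
def sFold {k : Type*} [Field k] (I : Ideal (MvPolynomial ℕ k)) (s : ℕ) :
    Set (MvPolynomial ℕ k) :=
  {m | ∃ L : List (MvPolynomial ℕ k), L.length = s ∧ (∀ u ∈ L, u ∈ minGens I) ∧ m = L.prod}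

/-- `a >_lex b`: the first entry where `a` and `b` differ is bigger in `a`. -/
def lexGt (a b : ℕ → ℕ) : Prop :=
  ∃ t, (∀ j, j < t → a j = b j) ∧ b t < a t

/-- `a` is an exponent-vector expression of `M` as an `s`-fold product of the terms of
the list `L`. -/
def IsExprOn {k : Type*} [Field k] (L : List (MvPolynomial ℕ k)) (s : ℕ) (a : ℕ → ℕ)
    (M : MvPolynomial ℕ k) : Prop :=
  (∀ i, L.length ≤ i → a i = 0) ∧ (∑ i ∈ Finset.range L.length, a i) = s ∧
    M = ∏ i ∈ Finset.range L.length, (L.getD i 1) ^ (a i)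

/-- `a` is the (lexicographically) maximal expression of `M` as an `s`-fold product of
the terms of the list `L`. -/
def IsMaxExpr {k : Type*} [Field k] (L : List (MvPolynomial ℕ k)) (s : ℕ) (a : ℕ → ℕ)
    (M : MvPolynomial ℕ k) : Prop :=
  IsExprOn L s a M ∧ ∀ b, IsExprOn L s b M → b ≠ a → lexGt a b

/-- The rooted order `M >_R N` on `s`-fold products, relative to the list `L` of
minimal generators: maximal expressions are compared lexicographically. -/
def rootedGt {k : Type*} [Field k] (L : List (MvPolynomial ℕ k)) (s : ℕ)
    (M N : MvPolynomial ℕ k) : Prop :=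
  ∃ a b, IsMaxExpr L s a M ∧ IsMaxExpr L s b N ∧ lexGt a b

/-- An ideal is generated by a subset of the variables. -/
def genByVars {k : Type*} [Field k] (I : Ideal (MvPolynomial ℕ k)) : Prop :=
  ∃ T : Set ℕ, I = Ideal.span ((fun i => (X i : MvPolynomial ℕ k)) '' T)

end

section MonomialIdeal

variable {σ R : Type*} [CommSemiring R]

theorem span_monomial_image_pow (C : Set (σ →₀ ℕ)) (s : ℕ) :
    Ideal.span ((fun d => monomial d (1 : R)) '' C) ^ s =
      Ideal.span ((fun d => monomial d (1 : R)) ''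
        {D | ∃ E : List (σ →₀ ℕ), E.length = s ∧ (∀ d ∈ E, d ∈ C) ∧ E.sum = D}) := by
  induction s with
  | zero =>
    have hzero : {D | ∃ E : List (σ →₀ ℕ), E.length = 0 ∧ (∀ d ∈ E, d ∈ C) ∧ E.sum = D} = {0} := by
      ext D
      simp [eq_comm]
    rw [pow_zero, hzero, Set.image_singleton, monomial_zero', C_1, Ideal.span_singleton_one,
      Ideal.one_eq_top]
  | succ s ih =>
    rw [pow_succ', ih, Ideal.span_mul_span']
    congr 1
    ext p
    simp only [Set.mem_mul, Set.mem_image, Set.mem_ofPred_eq]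
    constructor
    · rintro ⟨_, ⟨d, hd, rfl⟩, _, ⟨_, ⟨E, hlen, hE, rfl⟩, rfl⟩, rfl⟩
      refine ⟨(d :: E).sum, ⟨d :: E, by simp [hlen], ?_, rfl⟩, by simp [monomial_mul]⟩
      simpa [hd] using hE
    · rintro ⟨_, ⟨_ | ⟨d, E⟩, hlen, hE, rfl⟩, rfl⟩
      · simp at hlen
      · simp only [List.mem_cons, forall_eq_or_imp, List.length_cons] at hE hlen
        exact ⟨_, ⟨d, hE.1, rfl⟩, _, ⟨E.sum, ⟨E, by omega, hE.2, rfl⟩, rfl⟩,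
          by simp [monomial_mul]⟩

theorem monomial_mem_span_monomial_image_pow_iff {C : Set (σ →₀ ℕ)} {s : ℕ} {D : σ →₀ ℕ}
    [Nontrivial R] :
    monomial D (1 : R) ∈ Ideal.span ((fun d => monomial d (1 : R)) '' C) ^ s ↔
      ∃ E : List (σ →₀ ℕ), E.length = s ∧ (∀ d ∈ E, d ∈ C) ∧ E.sum ≤ D := by
  classical
  rw [span_monomial_image_pow, mem_ideal_span_monomial_image, support_monomial,
    if_neg one_ne_zero]
  simp only [Finset.mem_singleton, forall_eq, Set.mem_ofPred_eq]
  constructor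
  · rintro ⟨_, ⟨E, hlen, hE, rfl⟩, hle⟩
    exact ⟨E, hlen, hE, hle⟩
  · rintro ⟨E, hlen, hE, hle⟩
    exact ⟨E.sum, ⟨E, hlen, hE, rfl⟩, hle⟩

theorem list_prod_map_monomial (E : List (σ →₀ ℕ)) :
    (E.map fun d => monomial d (1 : R)).prod = monomial E.sum 1 := by
  induction E with
  | nil => simp
  | cons d E ih => rw [List.map_cons, List.prod_cons, ih, monomial_mul, one_mul, List.sum_cons]

end MonomialIdeal

section MinimalGenerators

variable {k : Type*} [Field k]

theorem monomial_mem_minGens_iff {I : Ideal (MvPolynomial ℕ k)} {d : ℕ →₀ ℕ} :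
    monomial d 1 ∈ minGens I ↔ Minimal (fun e => monomial e (1 : k) ∈ I) d := by
  have hdvd : ∀ e : ℕ →₀ ℕ, (monomial e (1 : k) ∣ monomial d 1 ↔ e ≤ d) := fun e => by
    simp [monomial_dvd_monomial]
  constructor
  · rintro ⟨-, hd, hmin⟩
    refine ⟨hd, fun e he hle => ?_⟩
    rw [monomial_left_injective one_ne_zero (hmin _ ⟨e, rfl⟩ he ((hdvd e).2 hle))]
  · rintro ⟨hd, hmin⟩
    refine ⟨⟨d, rfl⟩, hd, ?_⟩
    rintro _ ⟨e, rfl⟩ he hed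
    rw [le_antisymm ((hdvd e).1 hed) (hmin he ((hdvd e).1 hed))]

theorem mem_sFold_iff {I : Ideal (MvPolynomial ℕ k)} {s : ℕ} {U : MvPolynomial ℕ k} :
    U ∈ sFold I s ↔ ∃ E : List (ℕ →₀ ℕ), E.length = s ∧
      (∀ d ∈ E, Minimal (fun e => monomial e (1 : k) ∈ I) d) ∧ U = monomial E.sum 1 := by
  simp_rw [← monomial_mem_minGens_iff]
  constructor
  · rintro ⟨L, rfl, hL, rfl⟩
    induction L with
    | nil => exact ⟨[], rfl, by simp, by simp⟩
    | cons u L ih =>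
      obtain ⟨hu, hLtail⟩ := List.forall_mem_cons.1 hL
      obtain ⟨d, rfl⟩ := hu.1
      obtain ⟨E, hlen, hE, hprod⟩ := ih hLtail
      refine ⟨d :: E, by simp [hlen], List.forall_mem_cons.2 ⟨hu, hE⟩, ?_⟩
      rw [List.prod_cons, hprod, monomial_mul, one_mul, List.sum_cons]
  · rintro ⟨E, rfl, hE, rfl⟩
    exact ⟨E.map fun d => monomial d 1, by simp, by simpa using hE,
      (list_prod_map_monomial E).symm⟩

end MinimalGenerators

section ListSum

variable {ι : Type*}

theorem list_sum_apply (E : List (ι →₀ ℕ)) (j : ι) : E.sum j = (E.map (· j)).sum :=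
  map_list_sum (Finsupp.applyAddHom j) E

theorem list_sum_map_add_const {α : Type*} [AddCommMonoid α] (E : List α) (c : α) :
    (E.map (· + c)).sum = E.sum + E.length • c := by
  rw [List.sum_map_add, List.map_id', List.map_const', List.sum_replicate]

theorem list_sum_eq_sum_map_tsub_add {E : List (ι →₀ ℕ)} {c : ι →₀ ℕ} (hc : ∀ d ∈ E, c ≤ d) :
    E.sum = (E.map (· - c)).sum + E.length • c := by
  rw [← List.length_map (f := (· - c)), ← list_sum_map_add_const, List.map_map]
  congr 1
  conv_lhs => rw [← List.map_id E]
  exact List.map_congr_left fun d hd => (tsub_add_cancel_of_le (hc d hd)).symm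

theorem apply_eq_one_of_length_le_sum_apply {E : List (ι →₀ ℕ)} {j : ι}
    (hle : ∀ d ∈ E, d j ≤ 1) (hs : E.length ≤ E.sum j) : ∀ d ∈ E, d j = 1 := by
  by_contra! h
  obtain ⟨d, hd, hdj⟩ := h
  have hlt := List.sum_lt_sum (fun d : ι →₀ ℕ => d j) (fun _ => 1) hle ⟨d, hd, by
    have := hle d hd; omega⟩
  simp only [List.map_const', List.sum_replicate, smul_eq_mul, mul_one] at hlt
  rw [list_sum_apply] at hs
  omega

end ListSum

section Cover

def IsPathCover (N : ℕ) (d : ℕ →₀ ℕ) : Prop :=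
  ∀ i, 1 ≤ i → i < N → d i ≠ 0 ∨ d (i + 1) ≠ 0

variable {N m : ℕ} {d e : ℕ →₀ ℕ}

theorem IsPathCover.of_support_subset (h : IsPathCover N d) (hde : d.support ⊆ e.support) :
    IsPathCover N e := fun i hi hiN => by
  have hi := h i hi hiN
  simp only [← Finsupp.mem_support_iff] at hi ⊢
  exact hi.imp (@hde i) (@hde (i + 1))

theorem IsPathCover.mono (h : IsPathCover N d) (hle : d ≤ e) : IsPathCover N e :=
  h.of_support_subset (Finsupp.support_mono hle)

theorem IsPathCover.of_le {N' : ℕ} (h : IsPathCover N' d) (hN : N ≤ N') :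
    IsPathCover N d := fun i hi hiN => h i hi (by omega)

theorem isPathCover_congr (h : ∀ j, 1 ≤ j → j ≤ N → d j = e j) :
    IsPathCover N d ↔ IsPathCover N e := by
  refine forall_congr' fun i => imp_congr_right fun hi => imp_congr_right fun hiN => ?_
  rw [h i hi hiN.le, h (i + 1) (by omega) hiN]

theorem Minimal.apply_le_one (h : Minimal (IsPathCover N) d) (j : ℕ) : d j ≤ 1 := by
  have hcov : IsPathCover N (d - Finsupp.single j (d j - 1)) :=
    h.1.of_support_subset fun i => by
      rcases eq_or_ne j i with rfl | hji
      · simp; omega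
      · simp [hji]
  have := h.2 hcov tsub_le_self j
  simp only [Finsupp.tsub_apply, Finsupp.single_eq_same] at this
  omega

theorem Minimal.apply_eq_zero_of_lt (h : Minimal (IsPathCover N) d) {j : ℕ} (hj : N < j) :
    d j = 0 := by
  have hcov : IsPathCover N (d - Finsupp.single j (d j)) := by
    refine (isPathCover_congr fun i _ hiN => ?_).1 h.1
    simp [show j ≠ i by omega]
  have := h.2 hcov tsub_le_self j
  simp only [Finsupp.tsub_apply, Finsupp.single_eq_same, tsub_self] at this
  omega

variable {k : Type*} [Field k]

theorem pathCoverIdeal_eq_span (N : ℕ) :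
    pathCoverIdeal k N =
      Ideal.span ((fun d => monomial d (1 : k)) '' {d | IsPathCover N d}) := by
  ext p
  have hedge : ∀ i, Ideal.span {(X i : MvPolynomial ℕ k), X (i + 1)} = Ideal.span (X '' {i, i + 1}) :=
    fun i => by rw [Set.image_pair]
  simp only [pathCoverIdeal, Ideal.mem_iInf, hedge, mem_ideal_span_X_image,
    mem_ideal_span_monomial_image, Finset.mem_Icc, Set.mem_insert_iff, Set.mem_singleton_iff,
    exists_eq_or_imp, exists_eq_left, Set.mem_ofPred_eq]
  constructor
  · intro h d hd
    exact ⟨d, fun i hi hiN => h i ⟨hi, by omega⟩ d hd, le_rfl⟩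
  · rintro h i ⟨hi, hiN⟩ d hd
    obtain ⟨e, he, hle⟩ := h d hd
    exact (he.mono hle) i hi (by omega)

theorem monomial_mem_pathCoverIdeal_iff :
    monomial d (1 : k) ∈ pathCoverIdeal k N ↔ IsPathCover N d := by
  classical
  rw [pathCoverIdeal_eq_span, mem_ideal_span_monomial_image, support_monomial, if_neg one_ne_zero]
  simp only [Finset.mem_singleton, forall_eq, Set.mem_ofPred_eq]
  exact ⟨fun ⟨e, he, hle⟩ => he.mono hle, fun h => ⟨d, h, le_rfl⟩⟩

end Cover

section TailCover

/-- With `n = m + 4`, the exponent of `x_{n-2} x_n`. -/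
noncomputable def tailCover (m : ℕ) : ℕ →₀ ℕ := Finsupp.single (m + 2) 1 + Finsupp.single (m + 4) 1

variable {m : ℕ} {d e : ℕ →₀ ℕ}

theorem tailCover_apply (m j : ℕ) : tailCover m j = if j = m + 2 ∨ j = m + 4 then 1 else 0 := by
  simp only [tailCover, Finsupp.add_apply, Finsupp.single_apply]
  split_ifs <;> omega

theorem IsPathCover.extend (h : IsPathCover (m + 1) d) (h2 : d (m + 2) ≠ 0)
    (h4 : d (m + 4) ≠ 0) : IsPathCover (m + 4) d := fun i hi hiN => by
  obtain hi' | rfl | rfl | rfl : i < m + 1 ∨ i = m + 1 ∨ i = m + 2 ∨ i = m + 3 := by omega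
  · exact h i hi hi'
  · exact Or.inr h2
  · exact Or.inl h2
  · exact Or.inr h4

theorem IsPathCover.add_tailCover (h : IsPathCover (m + 1) e) :
    IsPathCover (m + 4) (e + tailCover m) :=
  (h.mono le_self_add).extend (by simp [tailCover_apply]) (by simp [tailCover_apply])

theorem IsPathCover.tailCover_le (h : IsPathCover (m + 4) d) (h3 : d (m + 3) = 0) :
    tailCover m ≤ d := fun j => by
  have h2 : d (m + 2) ≠ 0 ∨ d (m + 3) ≠ 0 := h (m + 2) (by omega) (by omega)
  have h4 : d (m + 3) ≠ 0 ∨ d (m + 4) ≠ 0 := h (m + 3) (by omega) (by omega)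
  rw [tailCover_apply]
  split_ifs with hj
  · rcases hj with rfl | rfl <;> omega
  · exact Nat.zero_le _

theorem IsPathCover.sub_tailCover (h : IsPathCover (m + 4) d) :
    IsPathCover (m + 1) (d - tailCover m) :=
  (isPathCover_congr fun j _ hj => by simp [tailCover_apply, show j ≠ m + 2 by omega,
    show j ≠ m + 4 by omega]).2 (h.of_le (by omega))

theorem Minimal.add_tailCover (h : Minimal (IsPathCover (m + 1)) e) :
    Minimal (IsPathCover (m + 4)) (e + tailCover m) := by
  refine ⟨h.1.add_tailCover, fun f hf hle => ?_⟩
  have h3 : f (m + 3) = 0 := by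
    simpa [h.apply_eq_zero_of_lt (show m + 1 < m + 3 by omega), tailCover_apply] using hle (m + 3)
  have htail := hf.tailCover_le h3
  rw [← le_tsub_iff_right htail]
  exact h.2 hf.sub_tailCover (tsub_le_iff_right.2 hle)

theorem Minimal.apply_add_three_eq_zero (h : Minimal (IsPathCover (m + 4)) d)
    (h2 : d (m + 2) ≠ 0) (h4 : d (m + 4) ≠ 0) : d (m + 3) = 0 := by
  have hcov : IsPathCover (m + 4) (d - Finsupp.single (m + 3) (d (m + 3))) := by
    refine IsPathCover.extend ?_ (by simpa using h2) (by simpa using h4)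
    exact (isPathCover_congr fun j _ hj => by simp [show m + 3 ≠ j by omega]).2
      (h.1.of_le (by omega))
  have := h.2 hcov tsub_le_self (m + 3)
  simp only [Finsupp.tsub_apply, Finsupp.single_eq_same, tsub_self] at this
  omega

theorem Minimal.sub_tailCover (h : Minimal (IsPathCover (m + 4)) d) (h3 : d (m + 3) = 0) :
    Minimal (IsPathCover (m + 1)) (d - tailCover m) := by
  have htail := h.1.tailCover_le h3
  refine ⟨h.1.sub_tailCover, fun g hg hle => ?_⟩
  rw [le_tsub_iff_right htail] at hle
  exact tsub_le_iff_right.2 (h.2 hg.add_tailCover hle)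

end TailCover

section Power

def DominatesCoverSum (N s : ℕ) (D : ℕ →₀ ℕ) : Prop :=
  ∃ E : List (ℕ →₀ ℕ), E.length = s ∧ (∀ d ∈ E, IsPathCover N d) ∧ E.sum ≤ D

variable {m s : ℕ} {D : ℕ →₀ ℕ}

theorem monomial_mem_pathCoverIdeal_pow_iff {k : Type*} [Field k] {N : ℕ} :
    monomial D (1 : k) ∈ pathCoverIdeal k N ^ s ↔ DominatesCoverSum N s D := by
  rw [pathCoverIdeal_eq_span, monomial_mem_span_monomial_image_pow_iff]
  rfl

theorem DominatesCoverSum.add_tailCover (h : DominatesCoverSum (m + 1) s D) :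
    DominatesCoverSum (m + 4) s (D + s • tailCover m) := by
  obtain ⟨E, rfl, hE, hle⟩ := h
  refine ⟨E.map (· + tailCover m), List.length_map _, ?_, ?_⟩
  · simpa using fun d hd => (hE d hd).add_tailCover
  · rw [list_sum_map_add_const]
    exact add_le_add_left hle _

theorem DominatesCoverSum.sub_tailCover (h : DominatesCoverSum (m + 4) s D)
    (h3 : D (m + 3) = 0) :
    DominatesCoverSum (m + 1) s (D - s • tailCover m) ∧ s • tailCover m ≤ D := by
  obtain ⟨E, rfl, hE, hle⟩ := h
  have hE3 : ∀ d ∈ E, d (m + 3) = 0 := by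
    have := hle (m + 3)
    rw [h3, Nat.le_zero, list_sum_apply, List.sum_eq_zero_iff] at this
    exact fun d hd => this _ (List.mem_map_of_mem hd)
  have hsum := list_sum_eq_sum_map_tsub_add fun d hd => (hE d hd).tailCover_le (hE3 d hd)
  rw [hsum] at hle
  refine ⟨⟨E.map (· - tailCover m), List.length_map _, ?_, le_tsub_of_add_le_right hle⟩,
    le_of_add_le_right hle⟩
  simpa using fun d hd => (hE d hd).sub_tailCover

theorem minimal_dominatesCoverSum_add_tailCover_iff (hD : D (m + 3) = 0) :
    Minimal (DominatesCoverSum (m + 4) s) (D + s • tailCover m) ↔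
      Minimal (DominatesCoverSum (m + 1) s) D := by
  have hD3 : (D + s • tailCover m) (m + 3) = 0 := by simp [hD, tailCover_apply]
  constructor
  · rintro ⟨hcov, hmin⟩
    refine ⟨by simpa using (hcov.sub_tailCover hD3).1, fun G hG hle => ?_⟩
    exact (add_le_add_iff_right _).1 (hmin hG.add_tailCover (add_le_add_left hle _))
  · rintro ⟨hcov, hmin⟩
    refine ⟨hcov.add_tailCover, fun D' hD' hle => ?_⟩
    obtain ⟨hsub, htail⟩ := hD'.sub_tailCover (by have := hle (m + 3); omega)
    rw [← le_tsub_iff_right htail]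
    exact hmin hsub (tsub_le_iff_right.2 hle)

end Power

section Transfer

variable {k : Type*} [Field k] {m s : ℕ}

theorem X_pow_mul_X_pow_eq_monomial (m s : ℕ) :
    (X (m + 4) : MvPolynomial ℕ k) ^ s * X (m + 2) ^ s = monomial (s • tailCover m) 1 := by
  rw [X_pow_eq_monomial, X_pow_eq_monomial, monomial_mul, one_mul, tailCover, smul_add,
    Finsupp.smul_single_one, Finsupp.smul_single_one, add_comm]

theorem mem_sFold_pathCoverIdeal_iff {N : ℕ} {U : MvPolynomial ℕ k} :
    U ∈ sFold (pathCoverIdeal k N) s ↔ ∃ E : List (ℕ →₀ ℕ), E.length = s ∧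
      (∀ d ∈ E, Minimal (IsPathCover N) d) ∧ U = monomial E.sum 1 := by
  simp only [mem_sFold_iff, monomial_mem_pathCoverIdeal_iff]

theorem exists_eq_monomial_of_mem_sFold {U : MvPolynomial ℕ k}
    (hU : U ∈ sFold (pathCoverIdeal k (m + 1)) s) : ∃ D, D (m + 3) = 0 ∧ U = monomial D 1 := by
  obtain ⟨E, -, hE, rfl⟩ := mem_sFold_pathCoverIdeal_iff.1 hU
  refine ⟨E.sum, ?_, rfl⟩
  rw [list_sum_apply, List.sum_eq_zero_iff]
  simp only [List.mem_map]
  rintro _ ⟨d, hd, rfl⟩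
  exact (hE d hd).apply_eq_zero_of_lt (by omega)

theorem mem_sFold_iff_X_pow_mul_mem_sFold {U : MvPolynomial ℕ k} :
    U ∈ sFold (pathCoverIdeal k (m + 1)) s ↔
      (X (m + 4) : MvPolynomial ℕ k) ^ s * X (m + 2) ^ s * U ∈
        sFold (pathCoverIdeal k (m + 4)) s := by
  simp only [mem_sFold_pathCoverIdeal_iff, X_pow_mul_X_pow_eq_monomial]
  constructor
  · rintro ⟨E, rfl, hE, rfl⟩
    refine ⟨E.map (· + tailCover m), List.length_map _, ?_, ?_⟩
    · simpa using fun d hd => (hE d hd).add_tailCover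
    · rw [list_sum_map_add_const, monomial_mul, one_mul, add_comm]
  · rintro ⟨F, rfl, hF, hU⟩
    have hdvd : F.length • tailCover m ≤ F.sum := by
      simpa [monomial_dvd_monomial] using Dvd.intro U hU
    have hone : ∀ j, j = m + 2 ∨ j = m + 4 → ∀ d ∈ F, d j = 1 := fun j hj =>
      apply_eq_one_of_length_le_sum_apply (fun d hd => (hF d hd).apply_le_one j)
        (by simpa [tailCover_apply, hj] using hdvd j)
    have h3 : ∀ d ∈ F, d (m + 3) = 0 := fun d hd =>
      (hF d hd).apply_add_three_eq_zero (by simp [hone _ (.inl rfl) d hd])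
        (by simp [hone _ (.inr rfl) d hd])
    refine ⟨F.map (· - tailCover m), List.length_map _, ?_, ?_⟩
    · simpa using fun d hd => (hF d hd).sub_tailCover (h3 d hd)
    · refine mul_left_cancel₀ (monomial_eq_zero.not.2 one_ne_zero) (hU.trans ?_)
      rw [monomial_mul, one_mul, add_comm,
        ← list_sum_eq_sum_map_tsub_add fun d hd => (hF d hd).1.tailCover_le (h3 d hd)]

theorem monomial_mem_minGens_pow_iff {D : ℕ →₀ ℕ} (hD : D (m + 3) = 0) :
    monomial D 1 ∈ minGens (pathCoverIdeal k (m + 1) ^ s) ↔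
      (X (m + 4) : MvPolynomial ℕ k) ^ s * X (m + 2) ^ s * monomial D 1 ∈
        minGens (pathCoverIdeal k (m + 4) ^ s) := by
  simp only [X_pow_mul_X_pow_eq_monomial, monomial_mul, one_mul, monomial_mem_minGens_iff,
    monomial_mem_pathCoverIdeal_pow_iff]
  rw [add_comm (s • tailCover m)]
  exact (minimal_dominatesCoverSum_add_tailCover_iff hD).symm

end Transfer

section RootedOrder

def prependZeros (r : ℕ) (b : ℕ → ℕ) : ℕ → ℕ := fun i => if i < r then 0 else b (i - r)

variable {r : ℕ}

theorem prependZeros_of_lt {b : ℕ → ℕ} {i : ℕ} (h : i < r) : prependZeros r b i = 0 := if_pos h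

theorem prependZeros_add (b : ℕ → ℕ) (j : ℕ) : prependZeros r b (r + j) = b j := by
  simp [prependZeros]

theorem prependZeros_injective : Function.Injective (prependZeros r) := fun a b h =>
  funext fun j => by simpa only [prependZeros_add] using congrFun h (r + j)

theorem lexGt_prependZeros_iff {a b : ℕ → ℕ} :
    lexGt (prependZeros r a) (prependZeros r b) ↔ lexGt a b := by
  constructor
  · rintro ⟨t, hpre, hlt⟩
    have hrt : r ≤ t := by
      by_contra! ht
      simp [prependZeros_of_lt ht] at hlt
    obtain ⟨j, rfl⟩ := Nat.exists_eq_add_of_le hrt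
    refine ⟨j, fun i hi => ?_, by simpa only [prependZeros_add] using hlt⟩
    simpa only [prependZeros_add] using hpre (r + i) (by omega)
  · rintro ⟨t, hpre, hlt⟩
    refine ⟨r + t, fun i hi => ?_, by simpa only [prependZeros_add] using hlt⟩
    simp only [prependZeros]
    split_ifs
    · rfl
    · exact hpre _ (by omega)

theorem getD_append_map_add {α : Type*} (A L : List α) (f : α → α) (d : α) {j : ℕ}
    (hj : j < L.length) : (A ++ L.map f).getD (A.length + j) d = f (L.getD j d) := by
  rw [List.getD_append_right _ _ _ _ (by omega), Nat.add_sub_cancel_left,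
    List.getD_eq_getElem _ _ (by simpa using hj), List.getElem_map, List.getD_eq_getElem]

theorem prod_range_append_map_mul {M : Type*} [CommMonoid M] (A L : List M) (c : M)
    (a : ℕ → ℕ) :
    ∏ i ∈ Finset.range (A ++ L.map (c * ·)).length, (A ++ L.map (c * ·)).getD i 1 ^ a i =
      (∏ i ∈ Finset.range A.length, A.getD i 1 ^ a i) *
        (c ^ (∑ j ∈ Finset.range L.length, a (A.length + j)) *
          ∏ j ∈ Finset.range L.length, L.getD j 1 ^ a (A.length + j)) := by
  rw [List.length_append, List.length_map, Finset.prod_range_add]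
  congr 1
  · exact Finset.prod_congr rfl fun i hi => by
      rw [List.getD_append _ _ _ _ (Finset.mem_range.1 hi)]
  · rw [← Finset.prod_pow_eq_pow_sum, ← Finset.prod_mul_distrib]
    exact Finset.prod_congr rfl fun j hj => by
      rw [getD_append_map_add _ _ _ _ (Finset.mem_range.1 hj), mul_pow]

variable {k : Type*} [Field k] {s : ℕ}

theorem IsExprOn.eq_zero_of_not_dvd {L : List (MvPolynomial ℕ k)} {a : ℕ → ℕ}
    {M : MvPolynomial ℕ k} (h : IsExprOn L s a M) {i : ℕ} (hi : i < L.length)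
    (hndvd : ¬L.getD i 1 ∣ M) : a i = 0 := by
  by_contra ha
  rw [h.2.2] at hndvd
  exact hndvd ((dvd_pow_self _ ha).trans
    (Finset.dvd_prod_of_mem (fun j => L.getD j 1 ^ a j) (Finset.mem_range.2 hi)))

theorem isExprOn_append_map_mul_iff {A L : List (MvPolynomial ℕ k)} {c M : MvPolynomial ℕ k}
    (hc : c ≠ 0) (hA : ∀ u ∈ A, ¬u ∣ c ^ s * M) (a : ℕ → ℕ) :
    IsExprOn (A ++ L.map (c * ·)) s a (c ^ s * M) ↔
      ∃ b, IsExprOn L s b M ∧ a = prependZeros A.length b := by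
  have hlen : (A ++ L.map (c * ·)).length = A.length + L.length := by simp
  constructor
  · intro hexpr
    have hfirst : ∀ i < A.length, a i = 0 := fun i hi => by
      refine hexpr.eq_zero_of_not_dvd (by omega) ?_
      rw [List.getD_append _ _ _ _ hi, List.getD_eq_getElem A 1 hi]
      exact hA _ (List.getElem_mem hi)
    obtain ⟨hz, hsum, hprod⟩ := hexpr
    have hprefix : ∑ i ∈ Finset.range A.length, a i = 0 :=
      Finset.sum_eq_zero fun i hi => hfirst i (Finset.mem_range.1 hi)
    rw [hlen, Finset.sum_range_add, hprefix, zero_add] at hsum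
    refine ⟨fun j => a (A.length + j), ⟨fun j hj => hz _ (by omega), hsum, ?_⟩, ?_⟩
    · rw [prod_range_append_map_mul, Finset.prod_eq_one fun i hi => by
        rw [hfirst i (Finset.mem_range.1 hi), pow_zero], one_mul, hsum] at hprod
      exact mul_left_cancel₀ (pow_ne_zero _ hc) hprod
    · funext i
      by_cases hi : i < A.length
      · rw [hfirst i hi, prependZeros_of_lt hi]
      · simp only [prependZeros, if_neg hi]
        congr 1
        omega
  · rintro ⟨b, ⟨hz, hsum, hprod⟩, rfl⟩
    have hprefix : ∀ i ∈ Finset.range A.length, prependZeros A.length b i = 0 :=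
      fun i hi => prependZeros_of_lt (Finset.mem_range.1 hi)
    refine ⟨fun i hi => ?_, ?_, ?_⟩
    · rw [hlen] at hi
      simp only [prependZeros, if_neg (show ¬i < A.length by omega)]
      exact hz _ (by omega)
    · simp only [hlen, Finset.sum_range_add, Finset.sum_eq_zero hprefix, prependZeros_add, hsum,
        zero_add]
    · rw [prod_range_append_map_mul, Finset.prod_eq_one fun i hi => by rw [hprefix i hi, pow_zero]]
      simp only [prependZeros_add, hsum, ← hprod, one_mul]

variable {L L' : List (MvPolynomial ℕ k)} {M M' N N' : MvPolynomial ℕ k}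

theorem isMaxExpr_prependZeros_iff
    (h : ∀ a, IsExprOn L' s a M' ↔ ∃ b, IsExprOn L s b M ∧ a = prependZeros r b) (b : ℕ → ℕ) :
    IsMaxExpr L' s (prependZeros r b) M' ↔ IsMaxExpr L s b M := by
  constructor
  · rintro ⟨hexpr, hmax⟩
    obtain ⟨b', hb', hbb'⟩ := (h _).1 hexpr
    obtain rfl := prependZeros_injective hbb'
    refine ⟨hb', fun c hc hne => ?_⟩
    exact lexGt_prependZeros_iff.1 (hmax _ ((h _).2 ⟨c, hc, rfl⟩) (prependZeros_injective.ne hne))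
  · rintro ⟨hexpr, hmax⟩
    refine ⟨(h _).2 ⟨b, hexpr, rfl⟩, fun a ha hne => ?_⟩
    obtain ⟨c, hc, rfl⟩ := (h a).1 ha
    exact lexGt_prependZeros_iff.2 (hmax c hc fun hcb => hne (hcb ▸ rfl))

theorem rootedGt_iff_of_isExprOn_iff
    (hM : ∀ a, IsExprOn L' s a M' ↔ ∃ b, IsExprOn L s b M ∧ a = prependZeros r b)
    (hN : ∀ a, IsExprOn L' s a N' ↔ ∃ b, IsExprOn L s b N ∧ a = prependZeros r b) :
    rootedGt L' s M' N' ↔ rootedGt L s M N := by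
  constructor
  · rintro ⟨_, _, ha, hb, hab⟩
    obtain ⟨a, -, rfl⟩ := (hM _).1 ha.1
    obtain ⟨b, -, rfl⟩ := (hN _).1 hb.1
    exact ⟨a, b, (isMaxExpr_prependZeros_iff hM a).1 ha, (isMaxExpr_prependZeros_iff hN b).1 hb,
      lexGt_prependZeros_iff.1 hab⟩
  · rintro ⟨a, b, ha, hb, hab⟩
    exact ⟨_, _, (isMaxExpr_prependZeros_iff hM a).2 ha, (isMaxExpr_prependZeros_iff hN b).2 hb,
      lexGt_prependZeros_iff.2 hab⟩

variable {m : ℕ}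

theorem rootedList_add_four (m : ℕ) :
    rootedList k (m + 4) = (rootedList k (m + 2)).map (X (m + 3) * ·) ++
      (rootedList k (m + 1)).map (X (m + 4) * X (m + 2) * ·) := rfl

theorem isExprOn_rootedList_add_four_iff {D : ℕ →₀ ℕ} (hD : D (m + 3) = 0) (a : ℕ → ℕ) :
    IsExprOn (rootedList k (m + 4)) s a (X (m + 4) ^ s * X (m + 2) ^ s * monomial D 1) ↔
      ∃ b, IsExprOn (rootedList k (m + 1)) s b (monomial D 1) ∧
        a = prependZeros (rootedList k (m + 2)).length b := by
  have hA : ∀ u ∈ (rootedList k (m + 2)).map (X (m + 3) * ·),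
      ¬u ∣ (X (m + 4) * X (m + 2)) ^ s * monomial D 1 := by
    simp only [List.mem_map]
    rintro _ ⟨w, -, rfl⟩ hdvd
    rw [mul_pow, X_pow_mul_X_pow_eq_monomial, monomial_mul, one_mul] at hdvd
    have hX := (dvd_mul_right _ w).trans hdvd
    rw [X, monomial_dvd_monomial] at hX
    simpa [hD, tailCover_apply] using hX.1.resolve_left one_ne_zero (m + 3)
  rw [rootedList_add_four, ← mul_pow]
  simpa only [List.length_map] using
    isExprOn_append_map_mul_iff (mul_ne_zero (X_ne_zero _) (X_ne_zero _)) hA a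

theorem rootedGt_rootedList_add_four_iff {D E : ℕ →₀ ℕ} (hD : D (m + 3) = 0)
    (hE : E (m + 3) = 0) :
    rootedGt (rootedList k (m + 1)) s (monomial D 1) (monomial E 1) ↔
      rootedGt (rootedList k (m + 4)) s (X (m + 4) ^ s * X (m + 2) ^ s * monomial D 1)
        (X (m + 4) ^ s * X (m + 2) ^ s * monomial E 1) :=
  (rootedGt_iff_of_isExprOn_iff (isExprOn_rootedList_add_four_iff hD)
    (isExprOn_rootedList_add_four_iff hE)).symm

end RootedOrder

theorem pure_sFold_xn_general (k : Type*) [Field k] (n s : ℕ) (hn : 4 ≤ n)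
    (U V : MvPolynomial ℕ k) :
    ((U ∈ sFold (pathCoverIdeal k (n - 3)) s ∧ V ∈ sFold (pathCoverIdeal k (n - 3)) s) ↔
      ((X n : MvPolynomial ℕ k) ^ s * (X (n - 2)) ^ s * U ∈ sFold (pathCoverIdeal k n) s ∧
        (X n : MvPolynomial ℕ k) ^ s * (X (n - 2)) ^ s * V ∈ sFold (pathCoverIdeal k n) s)) ∧
    (U ∈ sFold (pathCoverIdeal k (n - 3)) s → V ∈ sFold (pathCoverIdeal k (n - 3)) s →
      ((rootedGt (rootedList k (n - 3)) s U V ↔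
          rootedGt (rootedList k n) s
            ((X n : MvPolynomial ℕ k) ^ s * (X (n - 2)) ^ s * U)
            ((X n : MvPolynomial ℕ k) ^ s * (X (n - 2)) ^ s * V)) ∧
       (U ∈ minGens ((pathCoverIdeal k (n - 3)) ^ s) ↔
          (X n : MvPolynomial ℕ k) ^ s * (X (n - 2)) ^ s * U ∈
            minGens ((pathCoverIdeal k n) ^ s)))) := by
  obtain ⟨m, rfl⟩ := Nat.exists_eq_add_of_le' hn
  rw [show m + 4 - 3 = m + 1 by omega, show m + 4 - 2 = m + 2 by omega]
  refine ⟨and_congr mem_sFold_iff_X_pow_mul_mem_sFold mem_sFold_iff_X_pow_mul_mem_sFold,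
    fun hU hV => ?_⟩
  obtain ⟨D, hD, rfl⟩ := exists_eq_monomial_of_mem_sFold hU
  obtain ⟨E, hE, rfl⟩ := exists_eq_monomial_of_mem_sFold hV
  exact ⟨rootedGt_rootedList_add_four_iff hD hE, monomial_mem_minGens_pow_iff hD⟩

/-- (Pure s-fold products divisible by `x_n^s`.) For `n ≥ 4` and
`s ≥ 1`: `U, V ∈ F(J(P_{n-3})^s)` iff `x_n^s x_{n-2}^s U, x_n^s x_{n-2}^s V ∈ F(J(P_n)^s)`;
and in that case (1) `U >_R V` iff `x_n^s x_{n-2}^s U >_R x_n^s x_{n-2}^s V`, and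
(2) `U ∈ G(J(P_{n-3})^s)` iff `x_n^s x_{n-2}^s U ∈ G(J(P_n)^s)`. -/
theorem pure_sFold_xn (k : Type*) [Field k] (n s : ℕ) (hn : 4 ≤ n) (hs : 1 ≤ s)
    (U V : MvPolynomial ℕ k) :
    ((U ∈ sFold (pathCoverIdeal k (n - 3)) s ∧ V ∈ sFold (pathCoverIdeal k (n - 3)) s) ↔
      ((X n : MvPolynomial ℕ k) ^ s * (X (n - 2)) ^ s * U ∈ sFold (pathCoverIdeal k n) s ∧
        (X n : MvPolynomial ℕ k) ^ s * (X (n - 2)) ^ s * V ∈ sFold (pathCoverIdeal k n) s)) ∧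
    (U ∈ sFold (pathCoverIdeal k (n - 3)) s → V ∈ sFold (pathCoverIdeal k (n - 3)) s →
      ((rootedGt (rootedList k (n - 3)) s U V ↔
          rootedGt (rootedList k n) s
            ((X n : MvPolynomial ℕ k) ^ s * (X (n - 2)) ^ s * U)
            ((X n : MvPolynomial ℕ k) ^ s * (X (n - 2)) ^ s * V)) ∧
       (U ∈ minGens ((pathCoverIdeal k (n - 3)) ^ s) ↔
          (X n : MvPolynomial ℕ k) ^ s * (X (n - 2)) ^ s * U ∈
            minGens ((pathCoverIdeal k n) ^ s)))) :=
  pure_sFold_xn_general k n s hn U V
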